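/- Let H ∈ ℝ^{m×n} be the incidence matrix of an oriented graph and H̄ = H ⊗ I_d. Let p, p* ∈ ℝ^{dn} be two configurations with all edge vectors e_k = (H̄p)_k and e_k* = (H̄p*)_k nonzero, with bearings g_k = e_k/‖e_k‖ and g_k* = e_k*/‖e_k*‖, and bearing Laplacians L_B(p) and L_B(p*). Set p̃ = p − p* and γ' = min_{k=1,…,m} ‖e_k*‖²/‖e_k‖². Then p̃ᵀ L_B(p) p̃ = Σ_{k=1}^m (‖e_k*‖²/‖e_k‖²) (e_k − e_k*)ᵀ π_{g_k*} (e_k − e_k*) ≥ γ' · p̃ᵀ L_B(p*) p̃. -/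

import Mathlib

open MeasureTheory Matrix
open scoped Kronecker

/-- The projection operator `π_y = I_d - y yᵀ`. -/
noncomputable def proj {d : ℕ} (y : Fin d → ℝ) : Matrix (Fin d) (Fin d) ℝ :=
  1 - Matrix.vecMulVec y y

/-- `H` is the incidence matrix of an oriented graph. -/
def IsIncidence {m n : ℕ} (H : Matrix (Fin m) (Fin n) ℝ) : Prop :=
  ∃ head tail : Fin m → Fin n, (∀ k, head k ≠ tail k) ∧
    ∀ k i, H k i = if i = head k then 1 else if i = tail k then -1 else 0

/-- `H̄ = H ⊗ I_d`. -/
noncomputable def Hbar {m n : ℕ} (d : ℕ) (H : Matrix (Fin m) (Fin n) ℝ) :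
    Matrix (Fin m × Fin d) (Fin n × Fin d) ℝ :=
  H ⊗ₖ (1 : Matrix (Fin d) (Fin d) ℝ)

/-- `Π = blkdiag(π_{g_1}, …, π_{g_m})`. -/
noncomputable def blkProj {m d : ℕ} (g : Fin m → Fin d → ℝ) :
    Matrix (Fin m × Fin d) (Fin m × Fin d) ℝ :=
  Matrix.of fun p q => if p.1 = q.1 then proj (g p.1) p.2 q.2 else 0

/-- Euclidean norm of a vector in `ℝ^d` given as `Fin d → ℝ`. -/
noncomputable def enorm₂ {d : ℕ} (v : Fin d → ℝ) : ℝ := Real.sqrt (v ⬝ᵥ v)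

/-- The bearing (unit vector) of a nonzero vector. -/
noncomputable def bearingOf {d : ℕ} (v : Fin d → ℝ) : Fin d → ℝ := (enorm₂ v)⁻¹ • v

/-- The `k`-th edge vector `e_k = (H̄ p)_k ∈ ℝ^d` of a configuration `p`. -/
noncomputable def edgeVec {m n d : ℕ} (H : Matrix (Fin m) (Fin n) ℝ)
    (p : Fin n × Fin d → ℝ) (k : Fin m) : Fin d → ℝ :=
  fun i => (Hbar d H).mulVec p (k, i)

/-- The bearing Laplacian `L_B = H̄ᵀ Π H̄` of a configuration `p`. -/
noncomputable def LB {m n : ℕ} {d : ℕ} (H : Matrix (Fin m) (Fin n) ℝ)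
    (p : Fin n × Fin d → ℝ) : Matrix (Fin n × Fin d) (Fin n × Fin d) ℝ :=
  (Hbar d H)ᵀ * blkProj (fun k => bearingOf (edgeVec H p k)) * Hbar d H

/-- `U = 1_n ⊗ I_d`. -/
noncomputable def Umat (n d : ℕ) : Matrix (Fin n × Fin d) (Fin d) ℝ :=
  Matrix.of fun p j => if p.2 = j then 1 else 0


section Projection

variable {d : ℕ}

lemma dotProduct_proj_mulVec (y v : Fin d → ℝ) :
    v ⬝ᵥ proj y *ᵥ v = v ⬝ᵥ v - (y ⬝ᵥ v) ^ 2 := by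
  simp only [proj, sub_mulVec, one_mulVec, vecMulVec_mulVec, dotProduct_sub]
  simp [dotProduct_smul, dotProduct_comm v y, sq]

lemma enorm₂_sq (v : Fin d → ℝ) : enorm₂ v ^ 2 = v ⬝ᵥ v :=
  Real.sq_sqrt (dotProduct_self_star_nonneg v)

lemma bearingOf_dotProduct_sq (f v : Fin d → ℝ) :
    (bearingOf f ⬝ᵥ v) ^ 2 = (f ⬝ᵥ v) ^ 2 / (f ⬝ᵥ f) := by
  rw [bearingOf, smul_dotProduct, smul_eq_mul, mul_pow, inv_pow, enorm₂_sq, inv_mul_eq_div]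

lemma dotProduct_self_mul_dotProduct_proj_bearingOf_mulVec (f v : Fin d → ℝ) :
    (f ⬝ᵥ f) * (v ⬝ᵥ proj (bearingOf f) *ᵥ v) = (f ⬝ᵥ f) * (v ⬝ᵥ v) - (f ⬝ᵥ v) ^ 2 := by
  rcases eq_or_ne f 0 with rfl | hf
  · simp
  rw [dotProduct_proj_mulVec, bearingOf_dotProduct_sq, mul_sub,
    mul_div_cancel₀ _ (dotProduct_self_eq_zero.not.mpr hf)]

lemma dotProduct_proj_bearingOf_mulVec_nonneg (f v : Fin d → ℝ) :
    0 ≤ v ⬝ᵥ proj (bearingOf f) *ᵥ v := by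
  have cauchy_schwarz : (f ⬝ᵥ v) ^ 2 ≤ (v ⬝ᵥ v) * (f ⬝ᵥ f) := by
    simpa [dotProduct, sq, mul_comm] using Finset.sum_mul_sq_le_sq_mul_sq Finset.univ f v
  rw [dotProduct_proj_mulVec, bearingOf_dotProduct_sq, sub_nonneg]
  exact div_le_of_le_mul₀ (dotProduct_self_star_nonneg f) (dotProduct_self_star_nonneg v)
    cauchy_schwarz

/-- Both sides, multiplied by `‖e‖²`, equal the Gram determinant `‖e‖²‖f‖² - (e ⬝ f)²`. -/
lemma dotProduct_proj_bearingOf_sub {e : Fin d → ℝ} (he : e ≠ 0) (f : Fin d → ℝ) :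
    (e - f) ⬝ᵥ proj (bearingOf e) *ᵥ (e - f) =
      (enorm₂ f ^ 2 / enorm₂ e ^ 2) * ((e - f) ⬝ᵥ proj (bearingOf f) *ᵥ (e - f)) := by
  have gram_e := dotProduct_self_mul_dotProduct_proj_bearingOf_mulVec e (e - f)
  have gram_f := dotProduct_self_mul_dotProduct_proj_bearingOf_mulVec f (e - f)
  rw [enorm₂_sq, enorm₂_sq, div_mul_eq_mul_div, eq_div_iff (dotProduct_self_eq_zero.not.mpr he), mul_comm, gram_e, gram_f]
  simp only [dotProduct_sub, sub_dotProduct, dotProduct_comm f e]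
  ring

end Projection

section BearingLaplacian

variable {m n d : ℕ}

lemma dotProduct_blkProj_mulVec (g : Fin m → Fin d → ℝ) (y : Fin m × Fin d → ℝ) :
    y ⬝ᵥ blkProj g *ᵥ y =
      ∑ k, (fun i => y (k, i)) ⬝ᵥ proj (g k) *ᵥ (fun i => y (k, i)) := by
  simp only [dotProduct, mulVec, blkProj, of_apply, Fintype.sum_prod_type]
  refine Finset.sum_congr rfl fun k _ => Finset.sum_congr rfl fun i _ => ?_
  rw [Finset.sum_eq_single k (fun l _ hl => by simp [Ne.symm hl]) (by simp)]
  simp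

lemma edgeVec_sub (H : Matrix (Fin m) (Fin n) ℝ) (p q : Fin n × Fin d → ℝ) (k : Fin m) :
    edgeVec H (p - q) k = edgeVec H p k - edgeVec H q k := by
  funext i
  simp [edgeVec, mulVec_sub]

lemma dotProduct_LB_mulVec (H : Matrix (Fin m) (Fin n) ℝ) (q x : Fin n × Fin d → ℝ) :
    x ⬝ᵥ LB H q *ᵥ x =
      ∑ k, edgeVec H x k ⬝ᵥ proj (bearingOf (edgeVec H q k)) *ᵥ edgeVec H x k := by
  rw [LB, ← mulVec_mulVec, ← mulVec_mulVec, dotProduct_mulVec, vecMul_transpose,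
    dotProduct_blkProj_mulVec]
  rfl

end BearingLaplacian

theorem statement_13_general {d m n : ℕ} (hm : 0 < m)
    (H : Matrix (Fin m) (Fin n) ℝ)
    (p pstar : Fin n × Fin d → ℝ)
    (hnz : ∀ k : Fin m, edgeVec H p k ≠ 0) :
    (p - pstar) ⬝ᵥ (LB H p).mulVec (p - pstar) =
      ∑ k : Fin m, (enorm₂ (edgeVec H pstar k) ^ 2 / enorm₂ (edgeVec H p k) ^ 2) *
        ((edgeVec H p k - edgeVec H pstar k) ⬝ᵥ
          (proj (bearingOf (edgeVec H pstar k))).mulVec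
            (edgeVec H p k - edgeVec H pstar k)) ∧
    (haveI : Nonempty (Fin m) := Fin.pos_iff_nonempty.mp hm
     Finset.univ.inf' Finset.univ_nonempty
        (fun k => enorm₂ (edgeVec H pstar k) ^ 2 / enorm₂ (edgeVec H p k) ^ 2)) *
        ((p - pstar) ⬝ᵥ (LB H pstar).mulVec (p - pstar)) ≤
      (p - pstar) ⬝ᵥ (LB H p).mulVec (p - pstar) := by
  have reweighted : (p - pstar) ⬝ᵥ LB H p *ᵥ (p - pstar) =
      ∑ k, (enorm₂ (edgeVec H pstar k) ^ 2 / enorm₂ (edgeVec H p k) ^ 2) *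
        ((edgeVec H p k - edgeVec H pstar k) ⬝ᵥ
          proj (bearingOf (edgeVec H pstar k)) *ᵥ (edgeVec H p k - edgeVec H pstar k)) := by
    simp only [dotProduct_LB_mulVec, edgeVec_sub]
    exact Finset.sum_congr rfl fun k _ => dotProduct_proj_bearingOf_sub (hnz k) _
  refine ⟨reweighted, ?_⟩
  rw [reweighted, dotProduct_LB_mulVec, Finset.mul_sum]
  refine Finset.sum_le_sum fun k _ => ?_
  rw [edgeVec_sub]
  exact mul_le_mul_of_nonneg_right (Finset.inf'_le _ (Finset.mem_univ k))
    (dotProduct_proj_bearingOf_mulVec_nonneg _ _)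

/-- relation between the bearing Laplacian of the actual configuration
evaluated on the error `p̃ = p - p*` and the bearing Laplacian of the desired
configuration, with `γ' = min_k ‖e_k*‖²/‖e_k‖²`. -/
theorem statement_13 {d m n : ℕ} (hd : 2 ≤ d) (hm : 0 < m)
    (H : Matrix (Fin m) (Fin n) ℝ) (hH : IsIncidence H)
    (p pstar : Fin n × Fin d → ℝ)
    (hnz : ∀ k : Fin m, edgeVec H p k ≠ 0)
    (hnzstar : ∀ k : Fin m, edgeVec H pstar k ≠ 0) :
    (p - pstar) ⬝ᵥ (LB H p).mulVec (p - pstar) =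
      ∑ k : Fin m, (enorm₂ (edgeVec H pstar k) ^ 2 / enorm₂ (edgeVec H p k) ^ 2) *
        ((edgeVec H p k - edgeVec H pstar k) ⬝ᵥ
          (proj (bearingOf (edgeVec H pstar k))).mulVec
            (edgeVec H p k - edgeVec H pstar k)) ∧
    (haveI : Nonempty (Fin m) := Fin.pos_iff_nonempty.mp hm
     Finset.univ.inf' Finset.univ_nonempty
        (fun k => enorm₂ (edgeVec H pstar k) ^ 2 / enorm₂ (edgeVec H p k) ^ 2)) *
        ((p - pstar) ⬝ᵥ (LB H pstar).mulVec (p - pstar)) ≤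
      (p - pstar) ⬝ᵥ (LB H p).mulVec (p - pstar) :=
  statement_13_general hm H p pstar hnz
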